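/- Let x ∈ ℝ^{np} be k-block-sparse, let y = Ax + w with ‖A^T w‖_{b∞} ≤ κμ for some κ ∈ (0,1) and μ > 0, and let x̂ be a minimizer of (1/2)‖y − Az‖₂² + μ‖z‖_{b1} over z ∈ ℝ^{np} (the Block-Sparse LASSO). If ω_{b∞}(A^T A, 2k/(1−κ)) > 0, then ‖x̂ − x‖_{b∞} ≤ (1+κ)μ/ω_{b∞}(A^T A, 2k/(1−κ)). -/

import Mathlib

open MeasureTheory ProbabilityTheory Finset Matrix

/-- Euclidean norm of a finitely-indexed real vector. -/
noncomputable def vnorm {ι : Type*} [Fintype ι] (v : ι → ℝ) : ℝ :=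
  Real.sqrt (∑ i, (v i) ^ 2)

/-- Euclidean norm of the `i`-th block of `x ∈ ℝ^{np}` (blocks indexed by `Fin p`). -/
noncomputable def bnorm {n p : ℕ} (x : Fin p × Fin n → ℝ) (i : Fin p) : ℝ :=
  vnorm (fun j => x (i, j))

/-- Block-ℓ1 norm: `‖x‖_{b1} = ∑ i, ‖x_i‖₂`. -/
noncomputable def bl1 {n p : ℕ} (x : Fin p × Fin n → ℝ) : ℝ :=
  ∑ i, bnorm x i

/-- Block-ℓ∞ norm: `‖x‖_{b∞} = max_i ‖x_i‖₂`. -/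
noncomputable def blinf {n p : ℕ} (x : Fin p × Fin n → ℝ) : ℝ :=
  ⨆ i, bnorm x i

open scoped Classical in
/-- Block support: indices of nonzero blocks. -/
noncomputable def bsupp {n p : ℕ} (x : Fin p × Fin n → ℝ) : Finset (Fin p) :=
  Finset.univ.filter (fun i => ∃ j, x (i, j) ≠ 0)

/-- `ω₂(A,s) = inf { ‖Az‖₂ / ‖z‖_{b∞} : z ≠ 0, ‖z‖_{b1} ≤ s ‖z‖_{b∞} }`. -/
noncomputable def omega2 {m n p : ℕ} (A : Matrix (Fin m) (Fin p × Fin n) ℝ) (s : ℝ) : ℝ :=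
  sInf {r | ∃ z : Fin p × Fin n → ℝ, z ≠ 0 ∧ bl1 z ≤ s * blinf z ∧
    r = vnorm (A.mulVec z) / blinf z}

/-- `ω_{b∞}(AᵀA,s) = inf { ‖AᵀAz‖_{b∞} / ‖z‖_{b∞} : z ≠ 0, ‖z‖_{b1} ≤ s ‖z‖_{b∞} }`. -/
noncomputable def omegaBInf {m n p : ℕ} (A : Matrix (Fin m) (Fin p × Fin n) ℝ) (s : ℝ) : ℝ :=
  sInf {r | ∃ z : Fin p × Fin n → ℝ, z ≠ 0 ∧ bl1 z ≤ s * blinf z ∧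
    r = blinf ((Aᵀ * A).mulVec z) / blinf z}

/-- Block ℓ1-constrained minimal singular value
`ρ_s(A) = inf { ‖Az‖₂ / ‖z‖₂ : z ≠ 0, ‖z‖_{b1}² ≤ s ‖z‖₂² }`. -/
noncomputable def rhoCMSV {m n p : ℕ} (A : Matrix (Fin m) (Fin p × Fin n) ℝ) (s : ℝ) : ℝ :=
  sInf {r | ∃ z : Fin p × Fin n → ℝ, z ≠ 0 ∧ (bl1 z) ^ 2 ≤ s * (vnorm z) ^ 2 ∧
    r = vnorm (A.mulVec z) / vnorm z}

/-- Spectral norm (largest singular value) of a real matrix, as the ℓ2→ℓ2 operator norm. -/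
noncomputable def specNorm {ι κ : Type*} [Fintype ι] [Fintype κ] (M : Matrix ι κ ℝ) : ℝ :=
  sSup {r | ∃ v : κ → ℝ, vnorm v ≤ 1 ∧ r = vnorm (M.mulVec v)}

/-- The `j`-th column block (of `n` columns) of a matrix with `np` columns. -/
def colBlock {ι : Type*} {n p : ℕ} (Q : Matrix ι (Fin p × Fin n) ℝ) (j : Fin p) :
    Matrix ι (Fin n) ℝ := Matrix.of fun r c => Q r (j, c)

/-- The `l`-th row block (of `n` rows) of a matrix with `np` rows. -/
def rowBlock {κ : Type*} {n p : ℕ} (P : Matrix (Fin p × Fin n) κ ℝ) (l : Fin p) :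
    Matrix (Fin n) κ ℝ := Matrix.of fun r c => P (l, r) c

/-- `δ_{ij} Iₙ`. -/
def deltaId (n : ℕ) {p : ℕ} (i j : Fin p) : Matrix (Fin n) (Fin n) ℝ :=
  if i = j then 1 else 0

/-- Orlicz ψ₂ norm of a scalar random variable. -/
noncomputable def psi2 {Ω : Type*} [MeasurableSpace Ω] (μ : Measure Ω) (Y : Ω → ℝ) : ℝ :=
  sInf {t | 0 < t ∧ ∫ ω, Real.exp ((Y ω) ^ 2 / t ^ 2) ∂μ ≤ 2}

/-! With `h = x̂ - x`, optimality of `x̂` against moves along a single block gives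
`‖Aᵀ(y - A x̂)‖_{b∞} ≤ μ`; since `AᵀA h = -Aᵀ(y - A x̂) + Aᵀw`, this yields
`‖AᵀA h‖_{b∞} ≤ (1 + κ)μ`. Comparing the objective at `x̂` and at `x` gives
`‖x + h‖_{b1} ≤ ‖x‖_{b1} + κ‖h‖_{b1}`, and because `x` has at most `k` nonzero blocks this
forces `‖h‖_{b1} ≤ 2k/(1-κ) ‖h‖_{b∞}`. So `h` is admissible in the infimum defining
`ω_{b∞}(AᵀA, 2k/(1-κ))`, whence `ω ‖h‖_{b∞} ≤ ‖AᵀA h‖_{b∞} ≤ (1 + κ)μ`. -/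

open Filter Topology

section Euclidean

variable {ι : Type*} [Fintype ι]

theorem vnorm_eq_norm (v : ι → ℝ) : vnorm v = ‖(WithLp.toLp 2 v : EuclideanSpace ℝ ι)‖ := by
  simp [vnorm, EuclideanSpace.norm_eq]

theorem dotProduct_eq_inner (u v : ι → ℝ) :
    u ⬝ᵥ v = inner ℝ (WithLp.toLp 2 u : EuclideanSpace ℝ ι) (WithLp.toLp 2 v) := by
  simp [PiLp.inner_apply, dotProduct, mul_comm]

theorem vnorm_nonneg (v : ι → ℝ) : 0 ≤ vnorm v := Real.sqrt_nonneg _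

theorem vnorm_zero : vnorm (0 : ι → ℝ) = 0 := by simp [vnorm]

theorem vnorm_pos {v : ι → ℝ} (hv : v ≠ 0) : 0 < vnorm v := by
  rw [vnorm_eq_norm, norm_pos_iff]
  simpa using hv

theorem vnorm_sq (v : ι → ℝ) : vnorm v ^ 2 = v ⬝ᵥ v := by
  rw [vnorm_eq_norm, dotProduct_eq_inner, real_inner_self_eq_norm_sq]

theorem vnorm_add_le (u v : ι → ℝ) : vnorm (u + v) ≤ vnorm u + vnorm v := by
  simpa only [vnorm_eq_norm, WithLp.toLp_add] using norm_add_le _ _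

theorem vnorm_sub_vnorm_le (u v : ι → ℝ) : vnorm u - vnorm v ≤ vnorm (u + v) := by
  simpa only [vnorm_eq_norm, WithLp.toLp_add, WithLp.toLp_neg, norm_neg, sub_neg_eq_add]
    using norm_sub_norm_le (WithLp.toLp 2 u : EuclideanSpace ℝ ι) (WithLp.toLp 2 (-v))

theorem vnorm_smul (t : ℝ) (v : ι → ℝ) : vnorm (t • v) = |t| * vnorm v := by
  simp only [vnorm_eq_norm, WithLp.toLp_smul, norm_smul, Real.norm_eq_abs]

theorem vnorm_sub_sq (u v : ι → ℝ) :
    vnorm (u - v) ^ 2 = vnorm u ^ 2 - 2 * (u ⬝ᵥ v) + vnorm v ^ 2 := by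
  simpa only [vnorm_eq_norm, dotProduct_eq_inner, WithLp.toLp_sub] using norm_sub_sq_real _ _

theorem dotProduct_le_vnorm_mul_vnorm (u v : ι → ℝ) : u ⬝ᵥ v ≤ vnorm u * vnorm v := by
  simpa only [vnorm_eq_norm, dotProduct_eq_inner] using real_inner_le_norm _ _

end Euclidean

section Block

variable {n p : ℕ}

theorem bnorm_nonneg (x : Fin p × Fin n → ℝ) (i : Fin p) : 0 ≤ bnorm x i := vnorm_nonneg _

theorem bnorm_le_blinf (x : Fin p × Fin n → ℝ) (i : Fin p) : bnorm x i ≤ blinf x :=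
  le_ciSup (Set.finite_range _).bddAbove i

theorem blinf_le {x : Fin p × Fin n → ℝ} {c : ℝ} (hc : 0 ≤ c) (h : ∀ i, bnorm x i ≤ c) :
    blinf x ≤ c := by
  rcases isEmpty_or_nonempty (Fin p) with hp | hp
  · simpa [blinf] using hc
  · exact ciSup_le h

theorem blinf_nonneg (x : Fin p × Fin n → ℝ) : 0 ≤ blinf x := by
  rcases isEmpty_or_nonempty (Fin p) with hp | hp
  · simp [blinf]
  · exact (bnorm_nonneg x hp.some).trans (bnorm_le_blinf x hp.some)

theorem blinf_zero : blinf (0 : Fin p × Fin n → ℝ) = 0 :=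
  le_antisymm (blinf_le le_rfl fun _ => (vnorm_zero).le) (blinf_nonneg 0)

theorem blinf_pos {x : Fin p × Fin n → ℝ} (hx : x ≠ 0) : 0 < blinf x := by
  obtain ⟨⟨i, j⟩, hij⟩ := Function.ne_iff.1 hx
  exact (vnorm_pos (Function.ne_iff.2 ⟨j, hij⟩)).trans_le (bnorm_le_blinf x i)

theorem bnorm_add_le (x z : Fin p × Fin n → ℝ) (i : Fin p) :
    bnorm (x + z) i ≤ bnorm x i + bnorm z i :=
  vnorm_add_le _ _

theorem bnorm_sub_bnorm_le (x z : Fin p × Fin n → ℝ) (i : Fin p) :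
    bnorm x i - bnorm z i ≤ bnorm (x + z) i :=
  vnorm_sub_vnorm_le _ _

theorem bnorm_neg (x : Fin p × Fin n → ℝ) (i : Fin p) : bnorm (-x) i = bnorm x i := by
  simp only [bnorm, vnorm_eq_norm]
  exact norm_neg (WithLp.toLp 2 fun j => x (i, j) : EuclideanSpace ℝ (Fin n))

theorem bnorm_smul (t : ℝ) (x : Fin p × Fin n → ℝ) (i : Fin p) :
    bnorm (t • x) i = |t| * bnorm x i :=
  vnorm_smul t _

theorem blinf_add_le (x z : Fin p × Fin n → ℝ) : blinf (x + z) ≤ blinf x + blinf z :=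
  blinf_le (add_nonneg (blinf_nonneg x) (blinf_nonneg z)) fun i =>
    (bnorm_add_le x z i).trans (add_le_add (bnorm_le_blinf x i) (bnorm_le_blinf z i))

theorem blinf_neg (x : Fin p × Fin n → ℝ) : blinf (-x) = blinf x := by
  simp only [blinf, bnorm_neg]

theorem bl1_add_le (x z : Fin p × Fin n → ℝ) : bl1 (x + z) ≤ bl1 x + bl1 z := by
  simpa only [bl1, ← sum_add_distrib] using sum_le_sum fun i _ => bnorm_add_le x z i

theorem bl1_smul (t : ℝ) (x : Fin p × Fin n → ℝ) : bl1 (t • x) = |t| * bl1 x := by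
  simp only [bl1, bnorm_smul, mul_sum]

theorem dotProduct_le_blinf_mul_bl1 (x z : Fin p × Fin n → ℝ) : x ⬝ᵥ z ≤ blinf x * bl1 z := by
  rw [dotProduct, Fintype.sum_prod_type, bl1, mul_sum]
  exact sum_le_sum fun i _ => (dotProduct_le_vnorm_mul_vnorm _ _).trans
    (mul_le_mul_of_nonneg_right (bnorm_le_blinf x i) (bnorm_nonneg z i))

theorem bnorm_uncurry_single (i : Fin p) (u : Fin n → ℝ) (i' : Fin p) :
    bnorm (Function.uncurry (Pi.single i u)) i' = (Pi.single i (vnorm u) : Fin p → ℝ) i' :=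
  Pi.apply_single (fun _ => vnorm) (fun _ => vnorm_zero) i u i'

theorem bl1_uncurry_single (i : Fin p) (u : Fin n → ℝ) :
    bl1 (Function.uncurry (Pi.single i u)) = vnorm u := by
  simp [bl1, bnorm_uncurry_single]

theorem dotProduct_uncurry_single (x : Fin p × Fin n → ℝ) (i : Fin p)
    (u : Fin n → ℝ) : x ⬝ᵥ Function.uncurry (Pi.single i u) = (fun j => x (i, j)) ⬝ᵥ u := by
  simp [dotProduct, Fintype.sum_prod_type, Pi.single_apply, ite_apply, mul_ite]

end Block

theorem le_of_forall_pos_le_add_mul {a b c : ℝ} (h : ∀ t > 0, a ≤ b + t * c) : a ≤ b := by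
  have hlim : Tendsto (fun t : ℝ => b + t * c) (𝓝[>] 0) (𝓝 b) :=
    (Continuous.tendsto' (by fun_prop) 0 b (by simp)).mono_left nhdsWithin_le_nhds
  exact ge_of_tendsto hlim (eventually_nhdsWithin_of_forall h)

section Lasso

variable {m n p : ℕ} {A : Matrix (Fin m) (Fin p × Fin n) ℝ} {y : Fin m → ℝ}
  {xhat : Fin p × Fin n → ℝ} {μ : ℝ}

theorem bnorm_transpose_mulVec_residual_le (hμ : 0 ≤ μ)
    (hmin : ∀ z : Fin p × Fin n → ℝ,
      (1 / 2) * vnorm (y - A *ᵥ xhat) ^ 2 + μ * bl1 xhat ≤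
        (1 / 2) * vnorm (y - A *ᵥ z) ^ 2 + μ * bl1 z) (i : Fin p) :
    bnorm (Aᵀ *ᵥ (y - A *ᵥ xhat)) i ≤ μ := by
  set r := y - A *ᵥ xhat
  set u : Fin n → ℝ := fun j => (Aᵀ *ᵥ r) (i, j)
  set v : Fin p × Fin n → ℝ := Function.uncurry (Pi.single i u)
  set N := bnorm (Aᵀ *ᵥ r) i
  have hN : 0 ≤ N := bnorm_nonneg _ i
  -- moving `x̂` by `t v` lowers the data term by `t N²` to first order and raises the penalty
  -- by at most `μ t N`, so optimality forces `N² ≤ μ N`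
  have hquad : ∀ t > 0, N ^ 2 ≤ μ * N + t * (vnorm (A *ᵥ v) ^ 2 / 2) := by
    intro t ht
    have hz := hmin (xhat + t • v)
    have hres : y - A *ᵥ (xhat + t • v) = r - t • A *ᵥ v := by
      simp only [r, mulVec_add, mulVec_smul]; abel
    have hcorr : r ⬝ᵥ A *ᵥ v = N ^ 2 := by
      rw [dotProduct_mulVec, ← mulVec_transpose, dotProduct_uncurry_single, ← vnorm_sq]; rfl
    have hpen : bl1 (xhat + t • v) ≤ bl1 xhat + t * N := by
      refine (bl1_add_le _ _).trans_eq ?_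
      rw [bl1_smul, bl1_uncurry_single, abs_of_pos ht]; rfl
    rw [hres, vnorm_sub_sq r, dotProduct_smul, hcorr, vnorm_smul, mul_pow, sq_abs,
      smul_eq_mul] at hz
    have : t * N ^ 2 ≤ t * (μ * N + t * (vnorm (A *ᵥ v) ^ 2 / 2)) := by
      nlinarith [mul_le_mul_of_nonneg_left hpen hμ]
    exact le_of_mul_le_mul_left this ht
  have hsq : N ^ 2 ≤ μ * N := le_of_forall_pos_le_add_mul hquad
  nlinarith

variable {x : Fin p × Fin n → ℝ} {w : Fin m → ℝ} {κ : ℝ}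

theorem lasso_basic_inequality (hμ : 0 < μ) (hy : y = A *ᵥ x + w)
    (hw : blinf (Aᵀ *ᵥ w) ≤ κ * μ)
    (hmin : (1 / 2) * vnorm (y - A *ᵥ xhat) ^ 2 + μ * bl1 xhat ≤
      (1 / 2) * vnorm (y - A *ᵥ x) ^ 2 + μ * bl1 x) :
    bl1 xhat ≤ bl1 x + κ * bl1 (xhat - x) := by
  have hnoise : y - A *ᵥ x = w := by rw [hy]; abel
  have hres : y - A *ᵥ xhat = w - A *ᵥ (xhat - x) := by rw [hy, mulVec_sub]; abel
  have hcorr : w ⬝ᵥ A *ᵥ (xhat - x) ≤ κ * μ * bl1 (xhat - x) := by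
    rw [dotProduct_mulVec, ← mulVec_transpose]
    exact (dotProduct_le_blinf_mul_bl1 _ _).trans
      (mul_le_mul_of_nonneg_right hw (sum_nonneg fun i _ => bnorm_nonneg _ i))
  rw [hnoise, hres, vnorm_sub_sq] at hmin
  have : μ * bl1 xhat ≤ μ * (bl1 x + κ * bl1 (xhat - x)) := by
    nlinarith [sq_nonneg (vnorm (A *ᵥ (xhat - x)))]
  exact le_of_mul_le_mul_left this hμ

end Lasso

section Cone

variable {n p : ℕ}

theorem block_eq_zero_of_notMem_bsupp {x : Fin p × Fin n → ℝ} {i : Fin p} (hi : i ∉ bsupp x) :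
    (fun j => x (i, j)) = 0 := by
  funext j
  by_contra hj
  exact hi (mem_filter.2 ⟨mem_univ _, j, hj⟩)

theorem bl1_sub_add_le_bl1_add (x h : Fin p × Fin n → ℝ) :
    bl1 x - ∑ i ∈ bsupp x, bnorm h i + ∑ i ∈ (bsupp x)ᶜ, bnorm h i ≤ bl1 (x + h) := by
  set S := bsupp x
  have hoff : ∀ i ∈ Sᶜ, bnorm x i = 0 ∧ bnorm (x + h) i = bnorm h i := fun i hi => by
    have hblock := block_eq_zero_of_notMem_bsupp (mem_compl.1 hi)
    refine ⟨?_, ?_⟩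
    · rw [bnorm, hblock, vnorm_zero]
    · change vnorm ((fun j => x (i, j)) + fun j => h (i, j)) = _
      rw [hblock, zero_add]; rfl
  have hon : ∑ i ∈ S, (bnorm x i - bnorm h i) ≤ ∑ i ∈ S, bnorm (x + h) i :=
    sum_le_sum fun i _ => bnorm_sub_bnorm_le x h i
  rw [bl1, bl1, ← sum_add_sum_compl S, ← sum_add_sum_compl S (bnorm (x + h)),
    sum_congr rfl fun i hi => (hoff i hi).1, sum_congr rfl fun i hi => (hoff i hi).2]
  rw [sum_sub_distrib] at hon
  simp only [sum_const_zero]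
  linarith

theorem sum_bnorm_le_card_mul_blinf (s : Finset (Fin p)) (h : Fin p × Fin n → ℝ) :
    ∑ i ∈ s, bnorm h i ≤ s.card * blinf h := by
  simpa using sum_le_sum fun i (_ : i ∈ s) => bnorm_le_blinf h i

theorem bl1_le_of_bl1_add_le {x h : Fin p × Fin n → ℝ} {k : ℕ} {κ : ℝ}
    (hsparse : (bsupp x).card ≤ k) (hκ : κ < 1) (hcost : bl1 (x + h) ≤ bl1 x + κ * bl1 h) :
    bl1 h ≤ 2 * k / (1 - κ) * blinf h := by
  have hsplit : bl1 h = ∑ i ∈ bsupp x, bnorm h i + ∑ i ∈ (bsupp x)ᶜ, bnorm h i :=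
    (sum_add_sum_compl _ _).symm
  have hon : ∑ i ∈ bsupp x, bnorm h i ≤ k * blinf h :=
    (sum_bnorm_le_card_mul_blinf _ h).trans
      (mul_le_mul_of_nonneg_right (by exact_mod_cast hsparse) (blinf_nonneg h))
  have hlow := bl1_sub_add_le_bl1_add x h
  rw [div_mul_eq_mul_div, le_div_iff₀ (sub_pos.2 hκ)]
  rw [hsplit] at hcost ⊢
  linarith

end Cone

theorem omegaBInf_mul_blinf_le {m n p : ℕ} (A : Matrix (Fin m) (Fin p × Fin n) ℝ) {s : ℝ}
    {z : Fin p × Fin n → ℝ} (hz : bl1 z ≤ s * blinf z) :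
    omegaBInf A s * blinf z ≤ blinf ((Aᵀ * A) *ᵥ z) := by
  rcases eq_or_ne z 0 with rfl | hz0
  · simp [blinf_zero]
  rw [← le_div_iff₀ (blinf_pos hz0)]
  refine csInf_le ⟨0, ?_⟩ ⟨z, hz0, hz, rfl⟩
  rintro _ ⟨z, -, -, rfl⟩
  exact div_nonneg (blinf_nonneg _) (blinf_nonneg _)

theorem stmt7_general {m n p k : ℕ} (A : Matrix (Fin m) (Fin p × Fin n) ℝ)
    (x : Fin p × Fin n → ℝ) (w y : Fin m → ℝ) (xhat : Fin p × Fin n → ℝ) (κ μ : ℝ)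
    (hsparse : (bsupp x).card ≤ k)
    (hκ1 : κ < 1) (hμ : 0 < μ)
    (hy : y = A.mulVec x + w)
    (hw : blinf (Aᵀ.mulVec w) ≤ κ * μ)
    (hmin : ∀ z : Fin p × Fin n → ℝ,
      (1 / 2) * (vnorm (y - A.mulVec xhat)) ^ 2 + μ * bl1 xhat ≤
        (1 / 2) * (vnorm (y - A.mulVec z)) ^ 2 + μ * bl1 z)
    (hω : 0 < omegaBInf A (2 * k / (1 - κ))) :
    blinf (xhat - x) ≤ (1 + κ) * μ / omegaBInf A (2 * k / (1 - κ)) := by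
  have hcost : bl1 (x + (xhat - x)) ≤ bl1 x + κ * bl1 (xhat - x) := by
    rw [add_sub_cancel]
    exact lasso_basic_inequality hμ hy hw (hmin x)
  have hcone := bl1_le_of_bl1_add_le hsparse hκ1 hcost
  have hgram : (Aᵀ * A) *ᵥ (xhat - x) = -(Aᵀ *ᵥ (y - A *ᵥ xhat)) + Aᵀ *ᵥ w := by
    rw [← mulVec_mulVec, hy, ← mulVec_neg, ← mulVec_add, mulVec_sub]
    congr 1
    abel
  have hdual : blinf (Aᵀ *ᵥ (y - A *ᵥ xhat)) ≤ μ :=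
    blinf_le hμ.le (bnorm_transpose_mulVec_residual_le hμ.le hmin)
  rw [le_div_iff₀ hω, mul_comm]
  calc omegaBInf A (2 * k / (1 - κ)) * blinf (xhat - x)
      ≤ blinf ((Aᵀ * A) *ᵥ (xhat - x)) := omegaBInf_mul_blinf_le A hcone
    _ ≤ blinf (-(Aᵀ *ᵥ (y - A *ᵥ xhat))) + blinf (Aᵀ *ᵥ w) := hgram ▸ blinf_add_le _ _
    _ ≤ (1 + κ) * μ := by rw [blinf_neg]; linarith

/-- Theorem 1, BS-LASSO: `‖x̂ - x‖_{b∞} ≤ (1+κ)μ / ω_{b∞}(AᵀA, 2k/(1-κ))`. -/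
theorem stmt7 {m n p k : ℕ} (A : Matrix (Fin m) (Fin p × Fin n) ℝ)
    (x : Fin p × Fin n → ℝ) (w y : Fin m → ℝ) (xhat : Fin p × Fin n → ℝ) (κ μ : ℝ)
    (hsparse : (bsupp x).card ≤ k)
    (hκ0 : 0 < κ) (hκ1 : κ < 1) (hμ : 0 < μ)
    (hy : y = A.mulVec x + w)
    (hw : blinf (Aᵀ.mulVec w) ≤ κ * μ)
    (hmin : ∀ z : Fin p × Fin n → ℝ,
      (1 / 2) * (vnorm (y - A.mulVec xhat)) ^ 2 + μ * bl1 xhat ≤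
        (1 / 2) * (vnorm (y - A.mulVec z)) ^ 2 + μ * bl1 z)
    (hω : 0 < omegaBInf A (2 * k / (1 - κ))) :
    blinf (xhat - x) ≤ (1 + κ) * μ / omegaBInf A (2 * k / (1 - κ)) :=
  stmt7_general A x w y xhat κ μ hsparse hκ1 hμ hy hw hmin hω
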